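/- arXiv:2505.09250 — 3 statements merged into one kernel-verified Lean document; each statement's English description precedes it below -/
import Mathlib

section
/- Let G be a finite forest (acyclic simple graph), let S be a set of vertices, and let M be a nonempty set of vertices disjoint from S such that every vertex of M has degree at least 2 in G and all of its neighbors lie in S. Then |M| ≤ |S| − 1. -/
open SimpleGraph Walk

/-- In a path, an edge containing the initial vertex must be the first edge. -/
private lemma edge_start_aux {V : Type} {G : SimpleGraph V} {u v x : V}
    {q : G.Walk u v} (hq : q.IsPath) (hx : s(u, x) ∈ q.edges) :
    q.getVert 1 = x := by
  cases q with
  | nil => simp at hx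
  | cons h q' =>
    rw [Walk.edges_cons, List.mem_cons] at hx
    rw [Walk.cons_isPath_iff] at hq
    rcases hx with hx | hx
    · rw [Sym2.eq_iff] at hx
      rcases hx with ⟨-, hb⟩ | ⟨hub, hxu⟩
      · rw [Walk.getVert_cons_succ, Walk.getVert_zero, hb]
      · exact absurd hub h.ne
    · exact absurd (Walk.fst_mem_support_of_mem_edges q' hx) hq.2

/-- Extending a path `p : m ⟶ r` by an edge `s—m`, where `s` is not the second
vertex of `p`, gives a path (in an acyclic graph). -/
private lemma cons_path_aux {V : Type} {G : SimpleGraph V} (hG : G.IsAcyclic)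
    {m r s : V} (p : G.Walk m r) (hp : p.IsPath) (hadj : G.Adj m s)
    (hne : s ≠ p.getVert 1) : (p.cons hadj.symm).IsPath := by
  classical
  rw [Walk.cons_isPath_iff]
  refine ⟨hp, fun hs => ?_⟩
  have hsm : s ≠ m := hadj.ne'
  set q := p.takeUntil s hs with hqdef
  have hq : q.IsPath := hp.takeUntil hs
  refine hG (q.cons hadj.symm) ?_
  rw [Walk.cons_isCycle_iff]
  refine ⟨hq, fun he => ?_⟩
  rw [Sym2.eq_swap] at he
  have h1 : q.getVert 1 = s := edge_start_aux hq he
  have hqn : ¬ q.Nil := Walk.not_nil_of_ne (Ne.symm hsm)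
  have hql : 1 ≤ q.length := by
    rw [Walk.nil_iff_length_eq] at hqn; omega
  apply hne
  calc s = q.getVert 1 := h1.symm
    _ = ((q.append (p.dropUntil s hs)).getVert 1) := by
        rw [Walk.getVert_append]
        rcases Nat.lt_or_ge 1 q.length with h | h
        · simp [h]
        · have hlen : q.length = 1 := le_antisymm h hql
          simp [hlen, Walk.getVert_length q, h1]
    _ = p.getVert 1 := by rw [p.take_spec hs]

/-- In a finite forest `G`, if `M` is a nonempty set of vertices disjoint from
`S` such that every vertex of `M` has degree at least 2 and all its neighbors
lie in `S`, then `|M| ≤ |S| − 1`. -/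
theorem forest_middle_vertices_card {V : Type} [Fintype V]
    (G : SimpleGraph V) (hG : G.IsAcyclic) (M S : Set V)
    (hMne : M.Nonempty) (hdisj : Disjoint M S)
    (hdeg : ∀ m ∈ M, 2 ≤ (G.neighborSet m).ncard)
    (hnbr : ∀ m ∈ M, G.neighborSet m ⊆ S) :
    M.ncard + 1 ≤ S.ncard := by
  classical
  obtain ⟨m0, hm0⟩ := hMne
  -- root of each vertex: `m0` in its component, else a canonical representative
  set root : V → V :=
    fun v => if G.Reachable v m0 then m0 else (G.connectedComponentMk v).out
    with hrootdef
  have hreach : ∀ v, G.Reachable v (root v) := by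
    intro v
    by_cases h : G.Reachable v m0
    · simpa [hrootdef, h] using h
    · simp only [hrootdef, if_neg h]
      exact (ConnectedComponent.eq.mp (Quot.out_eq _)).symm
  have hroot_congr : ∀ v w, G.Reachable v w → root v = root w := by
    intro v w hvw
    by_cases h : G.Reachable v m0
    · simp [hrootdef, h, hvw.symm.trans h]
    · have h2 : ¬ G.Reachable w m0 := fun hh => h (hvw.trans hh)
      simp only [hrootdef, if_neg h, if_neg h2]
      congr 1
      exact ConnectedComponent.eq.mpr hvw
  have hrootm0 : root m0 = m0 := by
    have h0 : G.Reachable m0 m0 := Reachable.refl m0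
    simp [hrootdef, h0]
  -- a chosen path from each vertex to its root
  have hP : ∀ v, ∃ p : G.Walk v (root v), p.IsPath := by
    intro v
    exact ⟨(hreach v).some.toPath.1, (hreach v).some.toPath.2⟩
  choose P hPp using hP
  set nxt : V → V := fun v => (P v).getVert 1 with hnxtdef
  -- for each m in M, choose a neighbor different from `nxt m`
  have hex : ∀ m ∈ M, ∃ s, s ∈ G.neighborSet m ∧ s ≠ nxt m := by
    intro m hm
    exact Set.exists_ne_of_one_lt_ncard (by have := hdeg m hm; omega) (nxt m)
  set f : V → V := fun m =>
    if h : ∃ s, s ∈ G.neighborSet m ∧ s ≠ nxt m then h.choose else m with hfdef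
  have hf : ∀ m ∈ M, f m ∈ G.neighborSet m ∧ f m ≠ nxt m := by
    intro m hm
    have h := hex m hm
    simp only [hfdef, dif_pos h]
    exact h.choose_spec
  -- key: any path from `f m` to `root m` has `m` as its second vertex
  have parent : ∀ m ∈ M, ∀ (q : G.Walk (f m) (root m)), q.IsPath →
      q.getVert 1 = m := by
    intro m hm q hq
    obtain ⟨hadj, hne⟩ := hf m hm
    have hw : ((P m).cons (SimpleGraph.Adj.symm hadj)).IsPath :=
      cons_path_aux hG (P m) (hPp m) hadj hne
    have := hG.path_unique ⟨q, hq⟩ ⟨(P m).cons hadj.symm, hw⟩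
    have hqe : q = (P m).cons hadj.symm := congrArg Subtype.val this
    rw [hqe, Walk.getVert_cons_succ, Walk.getVert_zero]
  have hfS : ∀ m ∈ M, f m ∈ S := fun m hm => hnbr m hm (hf m hm).1
  -- injectivity
  have hinj : Set.InjOn f M := by
    intro m1 h1 m2 h2 hfeq
    have hadj1 : G.Adj m1 (f m1) := (hf m1 h1).1
    have hadj2 : G.Adj m2 (f m2) := (hf m2 h2).1
    have hr12 : G.Reachable m2 m1 :=
      hadj2.reachable.trans (by rw [← hfeq]; exact hadj1.reachable.symm)
    have hroot12 : root m2 = root m1 := hroot_congr _ _ hr12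
    set q : G.Walk (f m1) (root m1) :=
      (((P m2).cons hadj2.symm).copy hfeq.symm hroot12) with hqdef
    have hq : q.IsPath := by
      rw [hqdef, Walk.isPath_copy]
      exact cons_path_aux hG (P m2) (hPp m2) hadj2 (hf m2 h2).2
    have := parent m1 h1 q hq
    rw [hqdef, Walk.getVert_copy, Walk.getVert_cons_succ, Walk.getVert_zero]
      at this
    exact this.symm
  -- an extra element of `S` not in the image of `f`
  obtain ⟨s', hs'mem, hs'ne⟩ :=
    Set.exists_ne_of_one_lt_ncard (s := G.neighborSet m0)
      (by have := hdeg m0 hm0; omega) (f m0)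
  have hs'S : s' ∈ S := hnbr m0 hm0 hs'mem
  have hs'nimg : s' ∉ f '' M := by
    rintro ⟨m, hm, hfm⟩
    have hadj0 : G.Adj m0 s' := hs'mem
    have hrm : root m = m0 := by
      have hadjm : G.Adj m (f m) := (hf m hm).1
      have : G.Reachable m m0 := by
        rw [hfm] at hadjm
        exact hadjm.reachable.trans hadj0.reachable.symm
      rw [hroot_congr m m0 this, hrootm0]
    have hq0 : (Walk.cons hadj0.symm Walk.nil).IsPath := by
      simp [Walk.cons_isPath_iff, hadj0.ne']
    set q : G.Walk (f m) (root m) :=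
      ((Walk.cons hadj0.symm Walk.nil).copy hfm.symm hrm.symm) with hqdef
    have hq : q.IsPath := by rw [hqdef, Walk.isPath_copy]; exact hq0
    have := parent m hm q hq
    rw [hqdef, Walk.getVert_copy, Walk.getVert_cons_succ, Walk.getVert_zero]
      at this
    rw [← this] at hfm
    exact hs'ne hfm.symm
  -- counting
  have himg : insert s' (f '' M) ⊆ S := by
    rw [Set.insert_subset_iff]
    exact ⟨hs'S, by rintro _ ⟨m, hm, rfl⟩; exact hfS m hm⟩
  calc M.ncard + 1 = (f '' M).ncard + 1 := by
        rw [Set.ncard_image_of_injOn hinj]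
    _ = (insert s' (f '' M)).ncard :=
        (Set.ncard_insert_of_notMem hs'nimg (Set.toFinite _)).symm
    _ ≤ S.ncard := Set.ncard_le_ncard himg (Set.toFinite S)
end

section
/- Let F be a finite tree with at least two vertices, and let S ⊆ V(F) contain all leaves of F. Then for every nonempty connected component K of F − S, the set of vertices of S adjacent in F to some vertex of K has size at least 2. -/
open SimpleGraph

private lemma induce_isAcyclic_aux {V : Type} {G : SimpleGraph V} (h : G.IsAcyclic)
    (s : Set V) : (G.induce s).IsAcyclic := by
  intro v c hc
  let e : G.induce s ↪g G := SimpleGraph.Embedding.induce s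
  exact h (c.map e.toHom) (hc.map e.injective)

private lemma tree_no_min_degree_aux {W : Type} [Fintype W] (H : SimpleGraph W)
    (htree : H.IsTree) (s₀ : W) (hs' : 1 ≤ (H.neighborSet s₀).ncard)
    (hdeg' : ∀ v, v ≠ s₀ → 2 ≤ (H.neighborSet v).ncard) : False := by
  classical
  have key : ∀ v : W, (H.neighborSet v).ncard = H.degree v := fun v => by
    rw [Set.ncard_eq_toFinset_card', Set.toFinset_card]
    exact SimpleGraph.card_neighborSet_eq_degree _ _
  have hs : 1 ≤ H.degree s₀ := (key s₀) ▸ hs'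
  have hdeg : ∀ v, v ≠ s₀ → 2 ≤ H.degree v := fun v hv => (key v) ▸ hdeg' v hv
  have hcard := htree.card_edgeFinset
  have hsum := H.sum_degrees_eq_twice_card_edges
  have hE : Fintype.card W - 1 = H.edgeFinset.card := by omega
  have h1 : 1 + 2 * H.edgeFinset.card ≤ ∑ v : W, H.degree v := by
    rw [← Finset.sum_erase_add _ _ (Finset.mem_univ s₀)]
    have h2 : ∑ _v ∈ Finset.univ.erase s₀, 2 ≤ ∑ v ∈ Finset.univ.erase s₀, H.degree v :=
      Finset.sum_le_sum (fun i hi => hdeg i (Finset.ne_of_mem_erase hi))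
    simp only [Finset.sum_const, smul_eq_mul,
      Finset.card_erase_of_mem (Finset.mem_univ s₀), Finset.card_univ] at h2
    omega
  omega

/-- Let `F` be a finite tree with at least two vertices and let `S` contain all
leaves of `F` (vertices of degree at most 1). Then for every nonempty connected
component `K` of `F − S`, the set of vertices of `S` adjacent to some vertex of
`K` has size at least 2. -/
theorem tree_component_two_neighbors_in_S {V : Type} [Fintype V]
    (F : SimpleGraph V) (hF : F.IsTree) (hV : 2 ≤ Fintype.card V)
    (S : Set V) (hleaf : ∀ v, (F.neighborSet v).ncard ≤ 1 → v ∈ S)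
    (K : Set V) (hKne : K.Nonempty) (hKS : K ⊆ Sᶜ)
    (hKconn : (F.induce K).Connected)
    (hKmax : ∀ a ∈ K, ∀ b, b ∉ S → F.Adj a b → b ∈ K) :
    2 ≤ {s | s ∈ S ∧ ∃ k ∈ K, F.Adj s k}.ncard := by
  classical
  by_contra hlt
  push_neg at hlt
  set N := {s | s ∈ S ∧ ∃ k ∈ K, F.Adj s k} with hN
  have hNcard : N.ncard ≤ 1 := by omega
  -- every neighbor of a vertex of K lies in K ∪ N
  have hnbr : ∀ k ∈ K, F.neighborSet k ⊆ K ∪ N := by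
    intro k hk b hb
    by_cases hbS : b ∈ S
    · exact Or.inr ⟨hbS, k, hk, (hb : F.Adj k b).symm⟩
    · exact Or.inl (hKmax k hk b hbS hb)
  have hdeg2 : ∀ k ∈ K, 2 ≤ (F.neighborSet k).ncard := by
    intro k hk
    by_contra h
    exact (hKS hk) (hleaf k (by omega))
  -- key degree computation on an induced subgraph containing all neighbors
  have hdegT : ∀ (T : Set V), ∀ v : T, (v : V) ∈ K → F.neighborSet (v : V) ⊆ T →
      2 ≤ ((F.induce T).neighborSet v).ncard := by
    intro T v hvK hvT
    have himg : Subtype.val '' ((F.induce T).neighborSet v) = F.neighborSet (v : V) := by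
      ext b
      constructor
      · rintro ⟨w, hw, rfl⟩
        exact hw
      · intro hb
        exact ⟨⟨b, hvT hb⟩, hb, rfl⟩
    have h1 : ((F.induce T).neighborSet v).ncard = (F.neighborSet (v : V)).ncard := by
      rw [← himg, Set.ncard_image_of_injective _ Subtype.val_injective]
    rw [h1]
    exact hdeg2 _ hvK
  rcases Nat.le_one_iff_eq_zero_or_eq_one.mp hNcard with h0 | h1
  · -- N empty: K itself is a tree with all degrees ≥ 2, impossible
    have hNe : N = ∅ := (Set.ncard_eq_zero (Set.toFinite N)).mp h0
    have htree : (F.induce K).IsTree :=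
      ⟨hKconn, induce_isAcyclic_aux hF.IsAcyclic K⟩
    obtain ⟨k0, hk0⟩ := hKne
    refine tree_no_min_degree_aux _ htree ⟨k0, hk0⟩ ?_ ?_
    · have := hdegT K ⟨k0, hk0⟩ hk0 (by
        intro b hb
        rcases hnbr k0 hk0 hb with h | h
        · exact h
        · simp [hNe] at h)
      omega
    · intro v _
      refine hdegT K v v.2 ?_
      intro b hb
      rcases hnbr _ v.2 hb with h | h
      · exact h
      · simp [hNe] at h
  · -- N = {s₀}
    obtain ⟨s₀, hs₀⟩ := (Set.ncard_eq_one).mp h1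
    obtain ⟨_, k₁, hk₁, hadj₁⟩ : s₀ ∈ N := by rw [hs₀]; rfl
    set T : Set V := K ∪ {s₀} with hT
    have hs₀T : s₀ ∈ T := Or.inr rfl
    have hconn : (F.induce T).Connected := by
      refine SimpleGraph.connected_induce_union hKconn.preconnected ?_ hk₁ rfl hadj₁.symm
      rw [SimpleGraph.induce_singleton_eq_top]
      exact SimpleGraph.preconnected_top
    have htree : (F.induce T).IsTree := ⟨hconn, induce_isAcyclic_aux hF.IsAcyclic T⟩
    have hnbrT : ∀ k ∈ K, F.neighborSet k ⊆ T := by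
      intro k hk b hb
      rcases hnbr k hk hb with h | h
      · exact Or.inl h
      · rw [hs₀] at h; exact Or.inr h
    refine tree_no_min_degree_aux _ htree ⟨s₀, hs₀T⟩ ?_ ?_
    · exact (Set.ncard_pos (Set.toFinite _)).mpr ⟨⟨k₁, Or.inl hk₁⟩, hadj₁⟩
    · intro v hv
      have hvK : (v : V) ∈ K := by
        have hv2 : (v : V) ∈ K ∪ {s₀} := v.2
        rcases hv2 with h | h
        · exact h
        · exact absurd (Subtype.ext (Set.mem_singleton_iff.mp h)) hv
      exact hdegT T v hvK (hnbrT _ hvK)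
end

section
/- A minimally connected hypergraph on a finite vertex set V has at most |V| − 1 hyperedges. That is, if H = (V, E) is a connected hypergraph with nonempty hyperedges such that for every hyperedge e ∈ E the hypergraph (V, E \ {e}) is disconnected, then |E| ≤ |V| − 1. -/
open Relation

private def hR {V : Type} (F : Finset (Finset V)) : V → V → Prop :=
  Relation.ReflTransGen (fun a b => ∃ e ∈ F, a ∈ e ∧ b ∈ e)

private def hsetoid {V : Type} (F : Finset (Finset V)) : Setoid V :=
  ⟨hR F, fun _ => Relation.ReflTransGen.refl,
    fun h => @Std.Symm.symm _ _ (@Relation.ReflTransGen.stdSymm _ _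
      ⟨fun _ _ ⟨e, he, ha, hb⟩ => ⟨e, he, hb, ha⟩⟩) _ _ h,
    fun h₁ h₂ => h₁.trans h₂⟩

open Classical in
private noncomputable def compCount {V : Type} [Fintype V] [DecidableEq V] (F : Finset (Finset V)) : ℕ :=
  Nat.card (Quotient (hsetoid F))

private theorem hR_mono {V : Type} {F F' : Finset (Finset V)} (h : F ⊆ F') {a b : V}
    (hab : hR F a b) : hR F' a b :=
  Relation.ReflTransGen.mono (r := fun a b => ∃ e ∈ F, a ∈ e ∧ b ∈ e) (p := fun a b => ∃ e ∈ F', a ∈ e ∧ b ∈ e)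
    (fun _ _ ⟨e, he, ha, hb⟩ => ⟨e, h he, ha, hb⟩) _ _ hab

private theorem compCount_empty {V : Type} [Fintype V] [DecidableEq V] :
    compCount (∅ : Finset (Finset V)) = Fintype.card V := by
  rw [compCount, ← Nat.card_eq_fintype_card]
  refine (Nat.card_eq_of_bijective (Quotient.mk _) ⟨fun a b hab => ?_, Quotient.exists_rep⟩).symm
  have h2 : hR (∅ : Finset (Finset V)) a b := Quotient.exact hab
  exact ((Relation.reflTransGen_iff_eq
    (fun c ⟨e, he, _⟩ => absurd he (Finset.notMem_empty e))).mp h2).symm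

private theorem compCount_lt {V : Type} [Fintype V] [DecidableEq V] {F : Finset (Finset V)}
    {e : Finset V} {a b : V} (hnab : ¬ hR F a b) (hab : hR (insert e F) a b) :
    compCount (insert e F) < compCount F := by
  classical
  have hmap : ∀ x y : V, (hsetoid F).r x y → (hsetoid (insert e F)).r x y :=
    fun x y h => hR_mono (Finset.subset_insert e F) h
  let f : Quotient (hsetoid F) → Quotient (hsetoid (insert e F)) :=
    Quotient.map id (fun x y h => hmap x y h)
  have hsurj : Function.Surjective f := fun q => by
    obtain ⟨v, rfl⟩ := Quotient.exists_rep q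
    exact ⟨Quotient.mk _ v, rfl⟩
  have hninj : ¬ Function.Injective f := fun hinj => by
    have : (Quotient.mk (hsetoid F) a) = Quotient.mk (hsetoid F) b := by
      apply hinj
      exact Quotient.sound hab
    exact hnab (Quotient.exact this)
  have : Nat.card (Quotient (hsetoid (insert e F))) < Nat.card (Quotient (hsetoid F)) := by
    rw [Nat.card_eq_fintype_card, Nat.card_eq_fintype_card]
    exact Fintype.card_lt_of_surjective_not_injective f hsurj hninj
  simpa [compCount] using this

/-- A hypergraph on the vertex set `V` with hyperedge family `E` is connected:
any two vertices are joined by a sequence of steps, each step lying inside a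
common hyperedge. -/
def HyperConnected {V : Type} (E : Finset (Finset V)) : Prop :=
  ∀ u v : V, Relation.ReflTransGen (fun a b => ∃ e ∈ E, a ∈ e ∧ b ∈ e) u v

/-- A minimally connected hypergraph on a finite vertex set `V` has at most
`|V| − 1` hyperedges: if `(V, E)` is connected with nonempty hyperedges, and
removing any single hyperedge destroys connectivity, then `|E| ≤ |V| − 1`. -/
theorem minimally_connected_hypergraph_card {V : Type} [Fintype V] [DecidableEq V]
    (E : Finset (Finset V)) (hne : ∀ e ∈ E, e.Nonempty)
    (hconn : HyperConnected E)
    (hmin : ∀ e ∈ E, ¬ HyperConnected (E.erase e)) :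
    E.card ≤ Fintype.card V - 1 := by
  classical
  have key : ∀ e ∈ E, ∃ a ∈ e, ∃ b ∈ e, ¬ hR (E.erase e) a b := by
    intro e he
    by_contra h
    push_neg at h
    apply hmin e he
    intro u v
    have hstep : ∀ x y : V, (∃ f ∈ E, x ∈ f ∧ y ∈ f) → hR (E.erase e) x y := by
      rintro x y ⟨f, hf, hx, hy⟩
      by_cases hfe : f = e
      · subst hfe; exact h x hx y hy
      · exact Relation.ReflTransGen.single ⟨f, Finset.mem_erase.mpr ⟨hfe, hf⟩, hx, hy⟩
    have hc := hconn u v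
    induction hc with
    | refl => exact Relation.ReflTransGen.refl
    | tail _ h2 ih => exact ih.trans (hstep _ _ h2)
  have main : ∀ F : Finset (Finset V), F ⊆ E → compCount F + F.card ≤ Fintype.card V := by
    intro F
    induction F using Finset.induction_on with
    | empty => intro _; simp [compCount_empty]
    | @insert e F henF ih =>
      intro hsub
      have heE : e ∈ E := hsub (Finset.mem_insert_self e F)
      have hFE' : F ⊆ E.erase e := fun f hf =>
        Finset.mem_erase.mpr ⟨fun hfe => henF (hfe ▸ hf), hsub (Finset.mem_insert_of_mem hf)⟩
      obtain ⟨a, ha, b, hb, hnab⟩ := key e heE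
      have hnabF : ¬ hR F a b := fun h => hnab (hR_mono hFE' h)
      have habI : hR (insert e F) a b :=
        Relation.ReflTransGen.single ⟨e, Finset.mem_insert_self e F, ha, hb⟩
      have hlt := compCount_lt hnabF habI
      have hIH := ih (fun f hf => hsub (Finset.mem_insert_of_mem hf))
      rw [Finset.card_insert_of_notMem henF]
      omega
  by_cases hV : Nonempty V
  · have h1 : 0 < compCount E := by
      haveI : Nonempty (Quotient (hsetoid E)) := ⟨Quotient.mk _ hV.some⟩
      exact Nat.card_pos
    have h2 := main E (le_refl E)
    omega
  · have hE : E = ∅ := Finset.eq_empty_of_forall_notMem fun e he => hV ⟨(hne e he).choose⟩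
    simp [hE]
end
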